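/- arXiv:2602.03823 — 3 statements merged into one kernel-verified Lean document; each statement's English description precedes it below -/
import Mathlib

section
/- Let (Ω, 𝒜, P) be a probability space, Y1 : Ω → α and Y0 : Ω → β measurable maps into measurable spaces α and β, T : Ω → Bool measurable, and let E ∈ 𝒜 be an event (representing {X = x}) with P(E ∩ {T = true}) > 0 and P(E ∩ {T = false}) > 0 (positivity). Assume unconfoundedness in the form: under the conditional measure P(· | E), the random variable Y1 is independent of T, and the random variable Y0 is independent of T. Then for every bounded measurable w : α × β → ℝ, the double integral of w against the product of the law of Y1 under P(· | E ∩ {T = true}) and the law of Y0 under P(· | E ∩ {T = false}) equals the double integral of w against the product of the law of Y1 under P(· | E) and the law of Y0 under P(· | E). That is, the Conditional Preference Treatment Effect ∫∫ w d(law(Y1 | E)) d(law(Y0 | E)) is identified from the arm-specific conditional outcome distributions. -/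
open MeasureTheory ProbabilityTheory

lemma map_cond_of_indepFun {Ω α : Type*} {mΩ : MeasurableSpace Ω} {mα : MeasurableSpace α}
    (Q : Measure Ω) [IsProbabilityMeasure Q] (f : Ω → α) (hf : Measurable f)
    (T : Ω → Bool) (hT : Measurable T) (b : Bool)
    (hpos : Q {ω | T ω = b} ≠ 0) (hInd : IndepFun f T Q) :
    (Q[|{ω | T ω = b}]).map f = Q.map f := by
  have hA : MeasurableSet {ω | T ω = b} := hT (measurableSet_singleton b)
  ext s hs
  rw [Measure.map_apply hf hs, Measure.map_apply hf hs, cond_apply hA,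
    Set.inter_comm]
  have : ({ω | T ω = b} : Set Ω) = T ⁻¹' {b} := rfl
  rw [this, hInd.measure_inter_preimage_eq_mul s {b} hs (measurableSet_singleton b)]
  show (Q {ω | T ω = b})⁻¹ * (Q (f ⁻¹' s) * Q {ω | T ω = b}) = _
  rw [mul_comm (Q (f ⁻¹' s)), ← mul_assoc,
    ENNReal.inv_mul_cancel hpos (measure_ne_top _ _), one_mul]

/-- Identifiability of the Conditional Preference Treatment Effect: under positivity and
unconfoundedness (conditional independence of each potential outcome from the treatment,
given the event `E = {X = x}`), the double integral of a bounded measurable preference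
function `w` against the product of the arm-specific conditional laws of `Y1` and `Y0`
equals the double integral against the product of the unconditional-on-arm laws. -/
theorem cpte_identifiable
    {Ω α β : Type*} {mΩ : MeasurableSpace Ω}
    {mα : MeasurableSpace α} {mβ : MeasurableSpace β}
    (P : Measure Ω) [IsProbabilityMeasure P]
    (Y1 : Ω → α) (hY1 : Measurable Y1)
    (Y0 : Ω → β) (hY0 : Measurable Y0)
    (T : Ω → Bool) (hT : Measurable T)
    (E : Set Ω) (hE : MeasurableSet E)
    (hpos1 : 0 < P (E ∩ {ω | T ω = true}))
    (hpos0 : 0 < P (E ∩ {ω | T ω = false}))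
    (hInd1 : IndepFun Y1 T P[|E])
    (hInd0 : IndepFun Y0 T P[|E])
    (w : α × β → ℝ) (hw : Measurable w)
    (C : ℝ) (hbound : ∀ p, |w p| ≤ C) :
    ∫ a, ∫ b, w (a, b) ∂((P[|E ∩ {ω | T ω = false}]).map Y0)
        ∂((P[|E ∩ {ω | T ω = true}]).map Y1)
      = ∫ a, ∫ b, w (a, b) ∂((P[|E]).map Y0) ∂((P[|E]).map Y1) := by
  have hEne : P E ≠ 0 := by
    intro h
    exact absurd (le_antisymm (h ▸ measure_mono Set.inter_subset_left) zero_le)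
      (ne_of_gt hpos1)
  haveI : IsProbabilityMeasure (P[|E]) := cond_isProbabilityMeasure hEne
  have hAt : MeasurableSet {ω | T ω = true} := hT (measurableSet_singleton true)
  have hAf : MeasurableSet {ω | T ω = false} := hT (measurableSet_singleton false)
  have hcond : ∀ b : Bool, (b = true → True) → (P[|E])[|{ω | T ω = b}]
      = P[|E ∩ {ω | T ω = b}] := fun b _ =>
    cond_cond_eq_cond_inter hE (hT (measurableSet_singleton b)) P
  have hQt : (P[|E]) {ω | T ω = true} ≠ 0 := by
    rw [cond_apply hE]
    exact (ENNReal.mul_pos (ENNReal.inv_ne_zero.2 (measure_ne_top _ _)) (ne_of_gt hpos1)).ne'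
  have hQf : (P[|E]) {ω | T ω = false} ≠ 0 := by
    rw [cond_apply hE]
    exact (ENNReal.mul_pos (ENNReal.inv_ne_zero.2 (measure_ne_top _ _)) (ne_of_gt hpos0)).ne'
  have h1 : (P[|E ∩ {ω | T ω = true}]).map Y1 = (P[|E]).map Y1 := by
    rw [← hcond true (fun _ => trivial)]
    exact map_cond_of_indepFun _ Y1 hY1 T hT true hQt hInd1
  have h0 : (P[|E ∩ {ω | T ω = false}]).map Y0 = (P[|E]).map Y0 := by
    rw [← hcond false (fun h => trivial)]
    exact map_cond_of_indepFun _ Y0 hY0 T hT false hQf hInd0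
  rw [h1, h0]
end

section
/- Let k ≥ 1 be a natural number and (Ω, 𝒜, P) a probability space. Let Y : Fin k → Ω → α and Z : Fin k → Ω → β be families of random variables such that the combined family (Y_1, …, Y_k, Z_1, …, Z_k) is mutually independent, the Y_i are identically distributed, and the Z_j are identically distributed. Let w : α × β → ℝ be measurable with |w(a, b)| ≤ 1 for all (a, b). Define S = (1 / k²) · Σ_{i ∈ Fin k} Σ_{j ∈ Fin k} w(Y_i, Z_j). Then the variance of S satisfies Var(S) ≤ 2 / k. -/
open MeasureTheory ProbabilityTheory

universe u

/-- Variance bound for the distributional k-NN cross-average: if the combined family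
`(Y_1, …, Y_k, Z_1, …, Z_k)` is mutually independent, the `Y_i` are identically
distributed, the `Z_j` are identically distributed, and `|w| ≤ 1`, then the variance of
`S = k⁻² Σ_i Σ_j w(Y_i, Z_j)` is at most `2 / k`. -/
theorem variance_knn_cross_average_le
    {Ω : Type*} {α β : Type u} {mΩ : MeasurableSpace Ω}
    {mα : MeasurableSpace α} {mβ : MeasurableSpace β}
    (P : Measure Ω) [IsProbabilityMeasure P]
    (k : ℕ) (hk : 1 ≤ k)
    (Y : Fin k → Ω → α) (Z : Fin k → Ω → β)
    (hYmeas : ∀ i, Measurable (Y i)) (hZmeas : ∀ j, Measurable (Z j))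
    (hindep : iIndepFun
      (m := fun s : Fin k ⊕ Fin k =>
        Sum.rec (motive := fun s => MeasurableSpace (Sum.elim (fun _ : Fin k => α) (fun _ : Fin k => β) s))
          (fun _ => mα) (fun _ => mβ) s)
      (fun s : Fin k ⊕ Fin k =>
        Sum.rec (motive := fun s => Ω → Sum.elim (fun _ : Fin k => α) (fun _ : Fin k => β) s)
          (fun i => Y i) (fun j => Z j) s) P)
    (hYid : ∀ i j, IdentDistrib (Y i) (Y j) P P)
    (hZid : ∀ i j, IdentDistrib (Z i) (Z j) P P)
    (w : α × β → ℝ) (hw : Measurable w) (hbound : ∀ p, |w p| ≤ 1)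
    (S : Ω → ℝ)
    (hS : S = fun ω => (1 / (k : ℝ) ^ 2) * ∑ i : Fin k, ∑ j : Fin k, w (Y i ω, Z j ω)) :
    variance S P ≤ 2 / k := by
  classical
  have hkR : (0:ℝ) < (k:ℝ) := by exact_mod_cast hk
  have hFmeas : ∀ s : Fin k ⊕ Fin k,
      @Measurable Ω (Sum.elim (fun _ : Fin k => α) (fun _ : Fin k => β) s) mΩ
        (Sum.rec (motive := fun s => MeasurableSpace (Sum.elim (fun _ : Fin k => α) (fun _ : Fin k => β) s))
          (fun _ => mα) (fun _ => mβ) s)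
        (Sum.rec (motive := fun s => Ω → Sum.elim (fun _ : Fin k => α) (fun _ : Fin k => β) s)
          (fun i => Y i) (fun j => Z j) s) := by
    rintro (i | j)
    · exact hYmeas i
    · exact hZmeas j
  set X : Fin k × Fin k → Ω → ℝ := fun p ω => w (Y p.1 ω, Z p.2 ω) with hXdef
  have hXmeas : ∀ p, Measurable (X p) := fun p => hw.comp ((hYmeas p.1).prodMk (hZmeas p.2))
  have hXbdd : ∀ p ω, |X p ω| ≤ 1 := fun p ω => hbound _
  have hXint : ∀ p, Integrable (X p) P := by
    intro p
    exact memLp_one_iff_integrable.mp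
      (MemLp.of_bound (hXmeas p).aestronglyMeasurable 1 (ae_of_all _ fun ω => hXbdd p ω))
  set m : Fin k × Fin k → ℝ := fun p => ∫ ω, X p ω ∂P with hmdef
  have hmbdd : ∀ p, |m p| ≤ 1 := by
    intro p
    calc |m p| ≤ ∫ ω, |X p ω| ∂P := by
          simpa [Real.norm_eq_abs] using norm_integral_le_integral_norm (μ := P) (fun ω => X p ω)
      _ ≤ ∫ ω, (1:ℝ) ∂P := integral_mono (hXint p).abs (integrable_const 1) (fun ω => hXbdd p ω)
      _ = 1 := by simp
  set f : Fin k × Fin k → Ω → ℝ := fun p ω => X p ω - m p with hfdef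
  have hfmeas : ∀ p, Measurable (f p) := fun p => (hXmeas p).sub measurable_const
  have hfbdd : ∀ p ω, |f p ω| ≤ 2 := fun p ω =>
    (abs_sub _ _).trans (by linarith [hXbdd p ω, hmbdd p])
  have hfint : ∀ p, Integrable (f p) P := fun p => (hXint p).sub (integrable_const _)
  have hfzero : ∀ p, ∫ ω, f p ω ∂P = 0 := by
    intro p
    rw [show (fun ω => f p ω) = fun ω => X p ω - m p from rfl,
      integral_sub (hXint p) (integrable_const _)]
    simp [hmdef]
  have hprodint : ∀ p q, Integrable (fun ω => f p ω * f q ω) P := by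
    intro p q
    refine memLp_one_iff_integrable.mp
      (MemLp.of_bound ((hfmeas p).mul (hfmeas q)).aestronglyMeasurable 4
        (ae_of_all _ fun ω => ?_))
    have := mul_le_mul (hfbdd p ω) (hfbdd q ω) (abs_nonneg _) (by norm_num)
    calc ‖f p ω * f q ω‖ = |f p ω| * |f q ω| := by rw [Real.norm_eq_abs, abs_mul]
      _ ≤ 4 := by linarith
  have hsqint : ∀ p, Integrable (fun ω => f p ω ^ 2) P := by
    intro p
    have := hprodint p p
    simpa [pow_two] using this
  have hXsqint : ∀ p, Integrable (fun ω => X p ω ^ 2) P := by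
    intro p
    refine memLp_one_iff_integrable.mp
      (MemLp.of_bound ((hXmeas p).pow_const 2).aestronglyMeasurable 1
        (ae_of_all _ fun ω => ?_))
    have h := hXbdd p ω
    calc ‖X p ω ^ 2‖ = |X p ω| ^ 2 := by rw [Real.norm_eq_abs, abs_pow]
      _ ≤ 1 := by nlinarith [abs_nonneg (X p ω)]
  have hsq : ∀ p, ∫ ω, f p ω ^ 2 ∂P ≤ 1 := by
    intro p
    have hexp : (fun ω => f p ω ^ 2)
        = fun ω => X p ω ^ 2 - (2 * m p) * X p ω + m p ^ 2 := by
      funext ω; simp only [hfdef]; ring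
    have ha : Integrable (fun ω => X p ω ^ 2 - 2 * m p * X p ω) P :=
      (hXsqint p).sub ((hXint p).const_mul (2 * m p))
    rw [hexp, integral_add ha (integrable_const _),
      integral_sub (hXsqint p) ((hXint p).const_mul (2 * m p)), integral_const_mul]
    have h1 : ∫ ω, X p ω ^ 2 ∂P ≤ 1 := by
      calc ∫ ω, X p ω ^ 2 ∂P ≤ ∫ ω, (1:ℝ) ∂P := by
            refine integral_mono (hXsqint p) (integrable_const 1) (fun ω => ?_)
            have key : ∀ x : ℝ, |x| ≤ 1 → x ^ 2 ≤ 1 := fun x hx => by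
              nlinarith [abs_nonneg x, sq_abs x]
            exact key _ (hXbdd p ω)
        _ = 1 := by simp
    have h2 : ∫ ω, X p ω ∂P = m p := rfl
    rw [h2]
    simp only [integral_const, measure_univ, ENNReal.toReal_one, probReal_univ, smul_eq_mul, one_mul]
    have key : ∀ x t : ℝ, t ≤ 1 → t - 2 * x * x + x ^ 2 ≤ 1 := fun x t ht => by
      nlinarith [sq_nonneg x]
    exact key (m p) _ h1
  -- cross terms bounded by 1
  have hcross : ∀ p q, ∫ ω, f p ω * f q ω ∂P ≤ 1 := by
    intro p q
    have hle : ∀ ω, f p ω * f q ω ≤ (f p ω ^ 2 + f q ω ^ 2) / 2 := by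
      intro ω
      have key : ∀ a b : ℝ, a * b ≤ (a ^ 2 + b ^ 2) / 2 := fun a b => by
        nlinarith [sq_nonneg (a - b)]
      exact key _ _
    calc ∫ ω, f p ω * f q ω ∂P ≤ ∫ ω, (f p ω ^ 2 + f q ω ^ 2) / 2 ∂P :=
          integral_mono (hprodint p q) (((hsqint p).add (hsqint q)).div_const 2) hle
      _ = (∫ ω, f p ω ^ 2 ∂P + ∫ ω, f q ω ^ 2 ∂P) / 2 := by
          rw [integral_div, integral_add (hsqint p) (hsqint q)]
      _ ≤ 1 := by linarith [hsq p, hsq q]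
  -- disjoint index pairs: covariance vanishes
  have hzero : ∀ p q : Fin k × Fin k, p.1 ≠ q.1 → p.2 ≠ q.2 →
      ∫ ω, f p ω * f q ω ∂P = 0 := by
    intro p q h1 h2
    have hind := hindep.indepFun_prodMk_prodMk hFmeas
      (Sum.inl p.1) (Sum.inr p.2) (Sum.inl q.1) (Sum.inr q.2)
      (by simp [h1]) (by simp) (by simp) (by simp [h2])
    have hind2 : IndepFun (f p) (f q) P :=
      hind.comp (show Measurable (fun x : α × β => w x - m p) from hw.sub measurable_const)
        (show Measurable (fun x : α × β => w x - m q) from hw.sub measurable_const)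
    have := hind2.integral_fun_mul_eq_mul_integral (hfint p).aestronglyMeasurable (hfint q).aestronglyMeasurable
    have heq : ∫ ω, f p ω * f q ω ∂P = (∫ ω, f p ω ∂P) * ∫ ω, f q ω ∂P := this
    rw [heq, hfzero p, hfzero q, mul_zero]
  -- rewrite S
  have hSalt : S = fun ω => (1 / (k : ℝ) ^ 2) * ∑ p : Fin k × Fin k, X p ω := by
    rw [hS]; funext ω
    rw [Fintype.sum_prod_type]
  have hSmeas : Measurable S := by
    rw [hSalt]
    exact measurable_const.mul (Finset.measurable_sum _ fun p _ => hXmeas p)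
  have hSbdd : ∀ ω, ‖S ω‖ ≤ 1 := by
    intro ω
    rw [hSalt]
    have h1 : |∑ p : Fin k × Fin k, X p ω| ≤ (k:ℝ)^2 := by
      calc |∑ p : Fin k × Fin k, X p ω| ≤ ∑ p : Fin k × Fin k, |X p ω| :=
            Finset.abs_sum_le_sum_abs _ _
        _ ≤ ∑ p : Fin k × Fin k, (1:ℝ) := Finset.sum_le_sum fun p _ => hXbdd p ω
        _ = (k:ℝ)^2 := by simp [Finset.card_univ]; ring
    rw [Real.norm_eq_abs, abs_mul, abs_of_nonneg (by positivity : (0:ℝ) ≤ 1 / (k:ℝ)^2)]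
    rw [div_mul_eq_mul_div, one_mul, div_le_one (by positivity)]
    exact h1
  have hSmem : MemLp S 2 P :=
    MemLp.of_bound hSmeas.aestronglyMeasurable 1 (ae_of_all _ hSbdd)
  have hESval : ∫ ω, S ω ∂P = (1 / (k : ℝ) ^ 2) * ∑ p : Fin k × Fin k, m p := by
    rw [hSalt, integral_const_mul, integral_finset_sum _ (fun p _ => hXint p)]
  -- variance identity
  rw [variance_eq_integral hSmem.aemeasurable,
    show (fun ω => (S ω - ∫ ω, S ω ∂P) ^ 2) = ((S - fun _ => ∫ ω, S ω ∂P) ^ (2:ℕ)) from rfl]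
  have hkey : ((S - fun _ => ∫ ω, S ω ∂P) ^ (2:ℕ))
      = fun ω => (1 / (k : ℝ) ^ 2) ^ 2 * (∑ p : Fin k × Fin k, f p ω) ^ 2 := by
    funext ω
    have h1 : S ω = (1 / (k : ℝ) ^ 2) * ∑ p : Fin k × Fin k, X p ω := by rw [hSalt]
    simp only [Pi.pow_apply, Pi.sub_apply, hESval, h1]
    rw [← mul_sub, ← Finset.sum_sub_distrib, mul_pow]
  rw [hkey]
  have hexpand : ∀ ω, (∑ p : Fin k × Fin k, f p ω) ^ 2
      = ∑ p : Fin k × Fin k, ∑ q : Fin k × Fin k, f p ω * f q ω := by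
    intro ω
    rw [pow_two, Finset.sum_mul_sum]
  have hint2 : ∀ p : Fin k × Fin k,
      Integrable (fun ω => ∑ q : Fin k × Fin k, f p ω * f q ω) P :=
    fun p => integrable_finset_sum _ (fun q _ => hprodint p q)
  have hintmain : ∫ ω, (1 / (k : ℝ) ^ 2) ^ 2 * (∑ p : Fin k × Fin k, f p ω) ^ 2 ∂P
      = (1 / (k : ℝ) ^ 2) ^ 2 *
        ∑ p : Fin k × Fin k, ∑ q : Fin k × Fin k, ∫ ω, f p ω * f q ω ∂P := by
    rw [integral_const_mul]
    congr 1
    simp_rw [hexpand]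
    rw [integral_finset_sum _ (fun p _ => hint2 p)]
    exact Finset.sum_congr rfl fun p _ => integral_finset_sum _ (fun q _ => hprodint p q)
  have hterm : ∀ p q : Fin k × Fin k, ∫ ω, f p ω * f q ω ∂P
      ≤ (if p.1 = q.1 then (1:ℝ) else 0) + (if p.2 = q.2 then (1:ℝ) else 0) := by
    intro p q
    by_cases h1 : p.1 = q.1
    · have h := hcross p q
      have h2 : (0:ℝ) ≤ if p.2 = q.2 then (1:ℝ) else 0 := by split_ifs <;> norm_num
      rw [if_pos h1]; linarith
    · by_cases h2 : p.2 = q.2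
      · rw [if_neg h1, if_pos h2]; have := hcross p q; linarith
      · rw [if_neg h1, if_neg h2, hzero p q h1 h2]; norm_num
  have hsum1 : ∀ a : Fin k, ∑ q : Fin k × Fin k, (if a = q.1 then (1:ℝ) else 0) = k := by
    intro a
    rw [Fintype.sum_prod_type]
    calc ∑ x : Fin k, ∑ _y : Fin k, (if a = x then (1:ℝ) else 0)
        = ∑ x : Fin k, (if a = x then (k:ℝ) else 0) :=
          Finset.sum_congr rfl (fun x _ => by split_ifs <;> simp)
      _ = k := by rw [Finset.sum_ite_eq]; simp
  have hsum2 : ∀ b : Fin k, ∑ q : Fin k × Fin k, (if b = q.2 then (1:ℝ) else 0) = k := by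
    intro b
    rw [Fintype.sum_prod_type]
    calc ∑ x : Fin k, ∑ y : Fin k, (if b = y then (1:ℝ) else 0)
        = ∑ _x : Fin k, (1:ℝ) :=
          Finset.sum_congr rfl (fun x _ => by rw [Finset.sum_ite_eq]; simp)
      _ = k := by simp
  have hcount : ∑ p : Fin k × Fin k, ∑ q : Fin k × Fin k,
      ((if p.1 = q.1 then (1:ℝ) else 0) + (if p.2 = q.2 then (1:ℝ) else 0)) = 2 * (k:ℝ)^3 := by
    have : ∀ p : Fin k × Fin k, ∑ q : Fin k × Fin k,
        ((if p.1 = q.1 then (1:ℝ) else 0) + (if p.2 = q.2 then (1:ℝ) else 0)) = 2 * k := by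
      intro p
      rw [Finset.sum_add_distrib, hsum1 p.1, hsum2 p.2]; ring
    rw [Finset.sum_congr rfl fun p _ => this p, Finset.sum_const, Finset.card_univ]
    simp [Fintype.card_prod]
    ring
  have hmain : ∑ p : Fin k × Fin k, ∑ q : Fin k × Fin k, ∫ ω, f p ω * f q ω ∂P
      ≤ 2 * (k:ℝ)^3 := by
    rw [← hcount]
    exact Finset.sum_le_sum fun p _ => Finset.sum_le_sum fun q _ => hterm p q
  calc ∫ ω, (1 / (k : ℝ) ^ 2) ^ 2 * (∑ p : Fin k × Fin k, f p ω) ^ 2 ∂P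
      = (1 / (k : ℝ) ^ 2) ^ 2 *
        ∑ p : Fin k × Fin k, ∑ q : Fin k × Fin k, ∫ ω, f p ω * f q ω ∂P := hintmain
    _ ≤ (1 / (k : ℝ) ^ 2) ^ 2 * (2 * (k:ℝ)^3) := by
        refine mul_le_mul_of_nonneg_left hmain (by positivity)
    _ = 2 / k := by field_simp
end

section
/- Let k ≥ 1 be a natural number and (Ω, 𝒜, P) a probability space. Let Y : Fin k → Ω → α and Z : Fin k → Ω → β be families of random variables such that the combined family (Y_1, …, Y_k, Z_1, …, Z_k) is mutually independent, the Y_i are identically distributed, and the Z_j are identically distributed. Let w : α × β → ℝ be measurable with |w(a, b)| ≤ 1 for all (a, b). Define S = (1 / k²) · Σ_{i ∈ Fin k} Σ_{j ∈ Fin k} w(Y_i, Z_j). Then for every ε > 0, P(|S − E[S]| > ε) ≤ 2 / (k · ε²). -/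
open MeasureTheory ProbabilityTheory

universe u

/-- Chebyshev concentration of the distributional k-NN cross-average: if the combined
family `(Y_1, …, Y_k, Z_1, …, Z_k)` is mutually independent, the `Y_i` are identically
distributed, the `Z_j` are identically distributed, and `|w| ≤ 1`, then
`S = k⁻² Σ_i Σ_j w(Y_i, Z_j)` satisfies `P(|S - E[S]| > ε) ≤ 2 / (k ε²)`. -/
theorem knn_cross_average_concentration
    {Ω : Type*} {α β : Type u} {mΩ : MeasurableSpace Ω}
    {mα : MeasurableSpace α} {mβ : MeasurableSpace β}
    (P : Measure Ω) [IsProbabilityMeasure P]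
    (k : ℕ) (hk : 1 ≤ k)
    (Y : Fin k → Ω → α) (Z : Fin k → Ω → β)
    (hYmeas : ∀ i, Measurable (Y i)) (hZmeas : ∀ j, Measurable (Z j))
    (hindep : iIndepFun (m :=
      (fun s : Fin k ⊕ Fin k =>
        Sum.rec (motive := fun s => MeasurableSpace (Sum.elim (fun _ : Fin k => α) (fun _ : Fin k => β) s))
          (fun _ => mα) (fun _ => mβ) s))
      (fun s : Fin k ⊕ Fin k =>
        Sum.rec (motive := fun s => Ω → Sum.elim (fun _ : Fin k => α) (fun _ : Fin k => β) s)
          (fun i => Y i) (fun j => Z j) s) P)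
    (hYid : ∀ i j, IdentDistrib (Y i) (Y j) P P)
    (hZid : ∀ i j, IdentDistrib (Z i) (Z j) P P)
    (w : α × β → ℝ) (hw : Measurable w) (hbound : ∀ p, |w p| ≤ 1)
    (S : Ω → ℝ)
    (hS : S = fun ω => (1 / (k : ℝ) ^ 2) * ∑ i : Fin k, ∑ j : Fin k, w (Y i ω, Z j ω)) :
    ∀ ε : ℝ, 0 < ε →
      P {ω | ε < |S ω - ∫ x, S x ∂P|} ≤ ENNReal.ofReal (2 / (k * ε ^ 2)) := by
  classical
  intro ε hε
  have hkR : (0:ℝ) < k := by exact_mod_cast hk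
  have hkne : (k:ℝ) ≠ 0 := ne_of_gt hkR
  set f : Fin k × Fin k → Ω → ℝ := fun p ω => w (Y p.1 ω, Z p.2 ω) with hfdef
  have hfmeas : ∀ p, Measurable (f p) :=
    fun p => hw.comp ((hYmeas p.1).prodMk (hZmeas p.2))
  have hfbd : ∀ p ω, |f p ω| ≤ 1 := fun p ω => hbound _
  have hfint : ∀ p, Integrable (f p) P := fun p =>
    (integrable_const (1:ℝ)).mono' (hfmeas p).aestronglyMeasurable
      (ae_of_all _ fun ω => by simpa using hfbd p ω)
  set μv : Fin k × Fin k → ℝ := fun p => ∫ ω, f p ω ∂P with hμvdef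
  have hμbd : ∀ p, |μv p| ≤ 1 := by
    intro p
    have := norm_integral_le_of_norm_le_const (μ := P) (f := f p) (C := 1)
      (ae_of_all _ fun ω => by simpa using hfbd p ω)
    simpa using this
  set c : Fin k × Fin k → Ω → ℝ := fun p ω => f p ω - μv p with hcdef
  have hcmeas : ∀ p, Measurable (c p) := fun p => (hfmeas p).sub measurable_const
  have hcbd : ∀ p ω, |c p ω| ≤ 2 := by
    intro p ω
    calc |c p ω| ≤ |f p ω| + |μv p| := abs_sub _ _
      _ ≤ 1 + 1 := add_le_add (hfbd p ω) (hμbd p)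
      _ = 2 := by norm_num
  have hcint : ∀ p, Integrable (c p) P := fun p => (hfint p).sub (integrable_const _)
  have hcmean : ∀ p, ∫ ω, c p ω ∂P = 0 := by
    intro p
    rw [integral_sub (hfint p) (integrable_const _)]
    simp [hμvdef]
  have hccint : ∀ p q, Integrable (fun ω => c p ω * c q ω) P := by
    intro p q
    refine (integrable_const (4:ℝ)).mono' ((hcmeas p).mul (hcmeas q)).aestronglyMeasurable
      (ae_of_all _ fun ω => ?_)
    simp only [Real.norm_eq_abs, abs_mul]
    calc |c p ω| * |c q ω| ≤ 2 * 2 :=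
      mul_le_mul (hcbd p ω) (hcbd q ω) (abs_nonneg _) (by norm_num)
      _ = 4 := by norm_num
  -- second moment bound
  have hsq : ∀ p, ∫ ω, c p ω ^ 2 ∂P ≤ 1 := by
    intro p
    have hf2int : Integrable (fun ω => f p ω ^ 2) P := by
      refine (integrable_const (1:ℝ)).mono' ((hfmeas p).pow_const 2).aestronglyMeasurable
        (ae_of_all _ fun ω => ?_)
      have h := hfbd p ω
      simp only [Real.norm_eq_abs]
      rw [abs_of_nonneg (sq_nonneg _)]
      nlinarith [abs_nonneg (f p ω), sq_abs (f p ω)]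
    have hexp : (fun ω => c p ω ^ 2)
        = fun ω => (f p ω ^ 2 - (2 * μv p) * f p ω) + μv p ^ 2 := by
      funext ω; simp only [hcdef]; ring
    rw [hexp, integral_add (by exact (hf2int.sub ((hfint p).const_mul _))) (integrable_const _),
      integral_sub hf2int ((hfint p).const_mul _), integral_const_mul]
    simp only [integral_const, measure_univ, ENNReal.toReal_one, one_smul, smul_eq_mul, probReal_univ]
    have h1 : ∫ ω, f p ω ^ 2 ∂P ≤ 1 := by
      have : ∀ ω, f p ω ^ 2 ≤ 1 := fun ω => by
        nlinarith [hfbd p ω, abs_nonneg (f p ω), sq_abs (f p ω)]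
      calc ∫ ω, f p ω ^ 2 ∂P ≤ ∫ _ω, (1:ℝ) ∂P := integral_mono hf2int (integrable_const _) this
        _ = 1 := by simp
    nlinarith [sq_nonneg (μv p), hμbd p]
  -- cross terms vanish for disjoint indices
  have hcross : ∀ p q : Fin k × Fin k, p.1 ≠ q.1 → p.2 ≠ q.2 →
      ∫ ω, c p ω * c q ω ∂P = 0 := by
    intro p q h1 h2
    have hFmeas : ∀ s : Fin k ⊕ Fin k,
        @Measurable Ω (Sum.elim (fun _ : Fin k => α) (fun _ : Fin k => β) s) mΩ
          (Sum.rec (motive := fun s => MeasurableSpace (Sum.elim (fun _ : Fin k => α) (fun _ : Fin k => β) s))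
            (fun _ => mα) (fun _ => mβ) s)
          (Sum.rec (motive := fun s => Ω → Sum.elim (fun _ : Fin k => α) (fun _ : Fin k => β) s)
            (fun i => Y i) (fun j => Z j) s) := by
      intro s; cases s with
      | inl i => exact hYmeas i
      | inr j => exact hZmeas j
    have hpair : IndepFun (fun ω => (Y p.1 ω, Z p.2 ω)) (fun ω => (Y q.1 ω, Z q.2 ω)) P :=
      hindep.indepFun_prodMk_prodMk hFmeas (Sum.inl p.1) (Sum.inr p.2) (Sum.inl q.1)
        (Sum.inr q.2) (by simp [h1]) (by simp) (by simp) (by simp [h2])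
    have hcindep : IndepFun (c p) (c q) P := by
      have := hpair.comp (φ := fun x : α × β => w x - μv p) (ψ := fun x : α × β => w x - μv q)
        (hw.sub measurable_const) (hw.sub measurable_const)
      exact this
    have hmul := hcindep.integral_mul_eq_mul_integral (hcmeas p).aestronglyMeasurable
      (hcmeas q).aestronglyMeasurable
    rw [show (fun ω => c p ω * c q ω) = c p * c q from rfl, hmul, hcmean p, hcmean q, mul_zero]
  -- rewrite S
  have hS' : S = fun ω => (1 / (k : ℝ) ^ 2) * ∑ p : Fin k × Fin k, f p ω := by
    rw [hS]; funext ω; rw [Fintype.sum_prod_type]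
  have hSbd : ∀ ω, |S ω| ≤ 1 := by
    intro ω
    rw [hS']
    simp only [abs_mul]
    have h1 : |∑ p : Fin k × Fin k, f p ω| ≤ (k:ℝ)^2 := by
      calc |∑ p : Fin k × Fin k, f p ω| ≤ ∑ p : Fin k × Fin k, |f p ω| :=
            Finset.abs_sum_le_sum_abs _ _
        _ ≤ ∑ _p : Fin k × Fin k, (1:ℝ) := Finset.sum_le_sum fun p _ => hfbd p ω
        _ = (k:ℝ)^2 := by simp [sq]
    have h2 : |1 / (k:ℝ)^2| = 1/(k:ℝ)^2 := abs_of_pos (by positivity)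
    rw [h2]
    rw [div_mul_eq_mul_div, one_mul, div_le_one (by positivity)]
    exact h1
  have hSmeas : Measurable S := by
    rw [hS']
    exact (measurable_const.mul (Finset.measurable_sum _ fun p _ => hfmeas p))
  have hSmem : MemLp S 2 P :=
    MemLp.of_bound hSmeas.aestronglyMeasurable 1 (ae_of_all _ fun ω => by simpa using hSbd ω)
  have hES : (∫ x, S x ∂P) = (1 / (k : ℝ) ^ 2) * ∑ p : Fin k × Fin k, μv p := by
    rw [hS', integral_const_mul, integral_finset_sum _ fun p _ => hfint p]
  have hkey : ∀ ω, S ω - ∫ x, S x ∂P = (1 / (k : ℝ) ^ 2) * ∑ p : Fin k × Fin k, c p ω := by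
    intro ω
    rw [hES, hS', hcdef]
    simp only [Finset.sum_sub_distrib, mul_sub]
  -- variance bound
  have hvar : variance S P ≤ 2 / k := by
    rw [variance_eq_integral hSmeas.aemeasurable]
    have hrw : ((S - fun _ => ∫ x, S x ∂P : Ω → ℝ) ^ (2:ℕ))
        = fun ω => (1 / (k : ℝ) ^ 2)^2 * ∑ p : Fin k × Fin k, ∑ q : Fin k × Fin k,
            c p ω * c q ω := by
      funext ω
      simp only [Pi.pow_apply, Pi.sub_apply]
      rw [hkey ω, mul_pow, sq (∑ p : Fin k × Fin k, c p ω), Finset.sum_mul_sum]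
    rw [show (∫ ω, (S ω - P[S]) ^ 2 ∂P : ℝ)
        = ∫ ω, ((S - fun _ => ∫ x, S x ∂P : Ω → ℝ) ^ (2:ℕ)) ω ∂P from rfl, hrw]
    calc (∫ ω, (1 / (k : ℝ) ^ 2)^2 * ∑ p : Fin k × Fin k, ∑ q : Fin k × Fin k,
            c p ω * c q ω ∂P)
        = (1 / (k : ℝ) ^ 2)^2 * ∑ p : Fin k × Fin k, ∑ q : Fin k × Fin k,
            ∫ ω, c p ω * c q ω ∂P := by
          rw [integral_const_mul]
          congr 1
          rw [integral_finset_sum _ fun p _ => integrable_finset_sum _ fun q _ => hccint p q]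
          exact Finset.sum_congr rfl fun p _ => integral_finset_sum _ fun q _ => hccint p q
      _ ≤ (1 / (k : ℝ) ^ 2)^2 * ∑ p : Fin k × Fin k, ∑ q : Fin k × Fin k,
            ((if p.1 = q.1 then (1:ℝ) else 0) + (if p.2 = q.2 then (1:ℝ) else 0)) := by
          refine mul_le_mul_of_nonneg_left ?_ (by positivity)
          have hint2 : ∀ r : Fin k × Fin k, Integrable (fun ω => c r ω ^ 2) P := by
            intro r
            have := hccint r r
            simpa [sq] using this
          have hshared : ∀ p q : Fin k × Fin k, ∫ ω, c p ω * c q ω ∂P ≤ 1 := by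
            intro p q
            have habs : ∀ a b : ℝ, a * b ≤ (a^2 + b^2)/2 := fun a b => by
              nlinarith [sq_nonneg (a - b)]
            have hpt : ∀ ω, c p ω * c q ω ≤ (c p ω ^2 + c q ω ^2)/2 := fun ω =>
              habs _ _
            calc ∫ ω, c p ω * c q ω ∂P
                ≤ ∫ ω, (c p ω ^2 + c q ω ^2)/2 ∂P :=
                  integral_mono (hccint p q) (((hint2 p).add (hint2 q)).div_const 2) hpt
              _ = ((∫ ω, c p ω ^2 ∂P) + ∫ ω, c q ω ^2 ∂P)/2 := by
                  rw [integral_div, integral_add (hint2 p) (hint2 q)]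
              _ ≤ (1+1)/2 := by
                  have := hsq p; have := hsq q; linarith
              _ = 1 := by norm_num
          refine Finset.sum_le_sum fun p _ => Finset.sum_le_sum fun q _ => ?_
          by_cases h1 : p.1 = q.1 <;> by_cases h2 : p.2 = q.2 <;>
            simp only [if_pos, if_neg, h1, h2, if_true, if_false]
          · linarith [hshared p q]
          · linarith [hshared p q]
          · linarith [hshared p q]
          · rw [hcross p q h1 h2]
            norm_num
      _ ≤ 2 / k := by
          have hcount : ∑ p : Fin k × Fin k, ∑ q : Fin k × Fin k,
              ((if p.1 = q.1 then (1:ℝ) else 0) + (if p.2 = q.2 then (1:ℝ) else 0))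
              = 2 * (k:ℝ)^3 := by
            simp only [Finset.sum_add_distrib]
            have e1 : ∀ p : Fin k × Fin k,
                (∑ q : Fin k × Fin k, if p.1 = q.1 then (1:ℝ) else 0) = k := by
              intro p
              rw [Fintype.sum_prod_type]
              have h0 : ∀ i : Fin k, (∑ _j : Fin k, if p.1 = i then (1:ℝ) else 0)
                  = if p.1 = i then (k:ℝ) else 0 := by
                intro i; split_ifs <;> simp
              rw [Finset.sum_congr rfl fun i _ => h0 i, Finset.sum_ite_eq]
              simp
            have e2 : ∀ p : Fin k × Fin k,
                (∑ q : Fin k × Fin k, if p.2 = q.2 then (1:ℝ) else 0) = k := by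
              intro p
              rw [Fintype.sum_prod_type]
              have h0 : ∀ i : Fin k, (∑ j : Fin k, if p.2 = j then (1:ℝ) else 0) = 1 := by
                intro i; rw [Finset.sum_ite_eq]; simp
              rw [Finset.sum_congr rfl fun i _ => h0 i]
              simp
            rw [Finset.sum_congr rfl fun p _ => e1 p, Finset.sum_congr rfl fun p _ => e2 p]
            simp [Finset.sum_const, Finset.card_univ]
            ring
          rw [hcount]
          refine le_of_eq ?_
          field_simp
  -- conclude via Chebyshev
  calc P {ω | ε < |S ω - ∫ x, S x ∂P|}
      ≤ P {ω | ε ≤ |S ω - ∫ x, S x ∂P|} := measure_mono (Set.setOf_subset_setOf.mpr fun ω h => le_of_lt h)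
    _ ≤ ENNReal.ofReal (variance S P / ε ^ 2) := meas_ge_le_variance_div_sq hSmem hε
    _ ≤ ENNReal.ofReal (2 / (k * ε ^ 2)) := by
        apply ENNReal.ofReal_le_ofReal
        rw [← div_div]
        gcongr
end
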